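/- arXiv:2308.04209 — 4 statements merged into one kernel-verified Lean document; each statement's English description precedes it below -/
import Mathlib

section
/- Let H be a group and let A_1, ..., A_n be subsets of H, each of which is invariant under conjugation by every element of H (i.e. g⁻¹A_ig = A_i for all g ∈ H). Then for every k with 0 ≤ k ≤ n, the set N_k = { g ∈ H : [a_1, ..., a_k, g, a_{k+1}, ..., a_n] = 1 for all a_1 ∈ A_1, ..., a_n ∈ A_n } is a normal subgroup of H. -/
/-- Left-normed iterated commutator of a list: `listComm [x₁, x₂, ..., xₘ] = [x₁, ..., xₘ]`,
where `[u, v] = u⁻¹v⁻¹uv`. -/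
def listComm {H : Type*} [Group H] : List H → H
  | [] => 1
  | x :: xs => xs.foldl (fun u v => u⁻¹ * v⁻¹ * u * v) x

namespace Stmt0Aux

variable {H : Type*} [Group H]

/-- The commutator operation. -/
def cm (u v : H) : H := u⁻¹ * v⁻¹ * u * v

lemma listComm_cons (x : H) (xs : List H) : listComm (x :: xs) = xs.foldl cm x := rfl

lemma cm_eq_one_iff (u v : H) : cm u v = 1 ↔ v * u = u * v := by
  rw [show cm u v = (v * u)⁻¹ * (u * v) by unfold cm; group, inv_mul_eq_one]

lemma cm_inv (u v : H) : (cm u v)⁻¹ = cm v u := by unfold cm; group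

lemma cm_conj (h u v : H) : cm (h⁻¹ * u * h) (h⁻¹ * v * h) = h⁻¹ * cm u v * h := by
  unfold cm; group

lemma foldl_cm_conj (h : H) : ∀ (l : List H) (x : H),
    (l.map fun z => h⁻¹ * z * h).foldl cm (h⁻¹ * x * h) = h⁻¹ * l.foldl cm x * h
  | [], x => rfl
  | z :: l, x => by
    simp only [List.map_cons, List.foldl_cons, cm_conj, foldl_cm_conj h l]

lemma listComm_conj (h : H) (l : List H) :
    listComm (l.map fun z => h⁻¹ * z * h) = h⁻¹ * listComm l * h := by
  cases l with
  | nil => simp [listComm]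
  | cons x xs =>
    simp only [List.map_cons, listComm_cons]
    exact foldl_cm_conj h xs x

/-- Step lemma: preimage of the centralizer of a conjugation-invariant set in the quotient. -/
lemma step (C : Set H) (hC : ∀ g : H, ∀ c ∈ C, g⁻¹ * c * g ∈ C)
    (M : Subgroup H) (hM : M.Normal) :
    ∃ N : Subgroup H, N.Normal ∧ (N : Set H) = {g : H | ∀ x ∈ C, cm g x ∈ M} := by
  haveI := hM
  set φ := QuotientGroup.mk' M with hφ
  have hS : ∀ q : H ⧸ M, ∀ s ∈ φ '' C, q⁻¹ * s * q ∈ φ '' C := by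
    intro q s hs
    obtain ⟨c, hc, rfl⟩ := hs
    obtain ⟨h, rfl⟩ := QuotientGroup.mk'_surjective M q
    exact ⟨h⁻¹ * c * h, hC h c hc, by simp only [map_mul, map_inv, hφ]⟩
  have hnorm : (Subgroup.centralizer (φ '' C)).Normal := by
    constructor
    intro z hz q
    rw [Subgroup.mem_centralizer_iff] at hz ⊢
    intro s hs
    have h1 := hz _ (hS q s hs)
    have h2 := congrArg (fun w => q * w * q⁻¹) h1
    simpa [mul_assoc] using h2
  refine ⟨(Subgroup.centralizer (φ '' C)).comap φ, hnorm.comap φ, ?_⟩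
  ext g
  simp only [SetLike.mem_coe, Subgroup.mem_comap, Subgroup.mem_centralizer_iff,
    Set.forall_mem_image, Set.mem_setOf_eq]
  refine forall₂_congr fun x hx => ?_
  rw [← QuotientGroup.eq_one_iff (cm g x),
    show ((cm g x : H) : H ⧸ M) = cm (φ g) (φ x) from by
      simp only [cm, QuotientGroup.mk'_apply, QuotientGroup.mk_mul, QuotientGroup.mk_inv]
      rfl,
    cm_eq_one_iff]

/-- Normal subgroup for a list of conjugation-invariant sets. -/
lemma listN : ∀ (Q : List (Set H)), (∀ B ∈ Q, ∀ g : H, ∀ c ∈ B, g⁻¹ * c * g ∈ B) →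
    ∃ M : Subgroup H, M.Normal ∧
      (M : Set H) = {x : H | ∀ q : List H, List.Forall₂ (· ∈ ·) q Q → q.foldl cm x = 1}
  | [], _ => ⟨⊥, inferInstance, by
      ext x
      simp [List.forall₂_nil_right_iff]⟩
  | B :: Q', h => by
    obtain ⟨M, hMn, hMs⟩ := listN Q' (fun B' hB' => h B' (List.mem_cons_of_mem _ hB'))
    obtain ⟨N, hNn, hNs⟩ := step B (fun g c hc => h B List.mem_cons_self g c hc) M hMn
    refine ⟨N, hNn, ?_⟩
    rw [hNs]
    ext x
    simp only [Set.mem_setOf_eq]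
    have hMmem : ∀ y : H, y ∈ M ↔ ∀ q : List H, List.Forall₂ (· ∈ ·) q Q' → q.foldl cm y = 1 :=
      fun y => by rw [← SetLike.mem_coe, hMs]; rfl
    constructor
    · intro hx q hq
      rcases List.forall₂_cons_right_iff.mp hq with ⟨b, q', hb, hq', rfl⟩
      have := (hMmem (cm x b)).mp (hx b hb) q' hq'
      simpa using this
    · intro hx b hb
      rw [hMmem]
      intro q' hq'
      have := hx (b :: q') (List.Forall₂.cons hb hq')
      simpa using this

lemma forall₂_conj (g : H) : ∀ {p : List H} {L : List (Set H)},
    (∀ B ∈ L, ∀ h : H, ∀ c ∈ B, h⁻¹ * c * h ∈ B) →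
    List.Forall₂ (· ∈ ·) p L → List.Forall₂ (· ∈ ·) (p.map fun z => g⁻¹ * z * g) L := by
  intro p L hL hp
  induction hp with
  | nil => simp
  | @cons a B p' L' hab _ ih =>
    simp only [List.map_cons]
    exact List.Forall₂.cons (hL B List.mem_cons_self g a hab)
      (ih (fun B' hB' => hL B' (List.mem_cons_of_mem _ hB')))

/-- Master lemma. -/
lemma master (P Q : List (Set H))
    (hP : ∀ B ∈ P, ∀ g : H, ∀ c ∈ B, g⁻¹ * c * g ∈ B)
    (hQ : ∀ B ∈ Q, ∀ g : H, ∀ c ∈ B, g⁻¹ * c * g ∈ B) :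
    ∃ N : Subgroup H, N.Normal ∧ (N : Set H) =
      {g : H | ∀ p q : List H, List.Forall₂ (· ∈ ·) p P → List.Forall₂ (· ∈ ·) q Q →
        listComm (p ++ g :: q) = 1} := by
  obtain ⟨M, hMn, hMs⟩ := listN Q hQ
  have hMmem : ∀ y : H, y ∈ M ↔ ∀ q : List H, List.Forall₂ (· ∈ ·) q Q → q.foldl cm y = 1 :=
    fun y => by rw [← SetLike.mem_coe, hMs]; rfl
  cases P with
  | nil =>
    refine ⟨M, hMn, ?_⟩
    rw [hMs]
    ext x
    simp only [Set.mem_setOf_eq]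
    constructor
    · intro hx p q hp hq
      rw [List.forall₂_nil_right_iff.mp hp]
      simpa [listComm_cons] using hx q hq
    · intro hx q hq
      simpa [listComm_cons] using hx [] q List.Forall₂.nil hq
  | cons B P' =>
    set C : Set H := {c | ∃ p : List H, List.Forall₂ (· ∈ ·) p (B :: P') ∧ listComm p = c}
      with hCdef
    have hCinv : ∀ g : H, ∀ c ∈ C, g⁻¹ * c * g ∈ C := by
      rintro g c ⟨p, hp, rfl⟩
      exact ⟨p.map fun z => g⁻¹ * z * g, forall₂_conj g hP hp, listComm_conj g p⟩
    obtain ⟨N, hNn, hNs⟩ := step C hCinv M hMn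
    refine ⟨N, hNn, ?_⟩
    rw [hNs]
    ext g
    simp only [Set.mem_setOf_eq]
    -- key computation
    have key : ∀ (a : H) (p' q : List H),
        listComm ((a :: p') ++ g :: q) = q.foldl cm (cm (listComm (a :: p')) g) := by
      intro a p' q
      rw [List.cons_append, listComm_cons, List.foldl_append, List.foldl_cons, listComm_cons]
    constructor
    · intro hg p q hp hq
      rcases List.forall₂_cons_right_iff.mp hp with ⟨a, p', ha, hp', rfl⟩
      rw [key]
      have hc : listComm (a :: p') ∈ C := ⟨a :: p', List.Forall₂.cons ha hp', rfl⟩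
      have h1 : cm g (listComm (a :: p')) ∈ M := hg _ hc
      have h2 : cm (listComm (a :: p')) g ∈ M := by
        rw [← cm_inv]; exact inv_mem h1
      exact (hMmem _).mp h2 q hq
    · rintro hg x ⟨p, hp, rfl⟩
      rcases List.forall₂_cons_right_iff.mp hp with ⟨a, p', ha, hp', rfl⟩
      have h2 : cm (listComm (a :: p')) g ∈ M := by
        rw [hMmem]
        intro q hq
        rw [← key]
        exact hg _ q (List.Forall₂.cons ha hp') hq
      rw [← cm_inv]
      exact inv_mem h2

lemma insertIdx_eq {α : Type*} (g : α) :
    ∀ (k : ℕ) (l : List α), k ≤ l.length → l.insertIdx k g = l.take k ++ g :: l.drop k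
  | 0, l, _ => by simp
  | k + 1, [], h => by simp at h
  | k + 1, x :: l, h => by
    simp only [List.insertIdx_succ_cons, List.take_succ_cons, List.drop_succ_cons,
      List.cons_append, List.cons.injEq, true_and]
    exact insertIdx_eq g k l (Nat.succ_le_succ_iff.mp (by simpa using h))

end Stmt0Aux

open Stmt0Aux in
/-- If `A₁, ..., Aₙ ⊆ H` are each invariant under conjugation by every element of `H`,
then for every `0 ≤ k ≤ n`, the set of `g ∈ H` with `[a₁, ..., a_k, g, a_{k+1}, ..., aₙ] = 1`
for all choices `aᵢ ∈ Aᵢ` is a normal subgroup of `H`. -/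
theorem stmt_0 {H : Type*} [Group H] (n : ℕ) (A : Fin n → Set H)
    (hinv : ∀ i : Fin n, ∀ g : H, (fun x => g⁻¹ * x * g) '' A i = A i)
    (k : ℕ) (hk : k ≤ n) :
    ∃ Nk : Subgroup H, Nk.Normal ∧
      (Nk : Set H) = {g : H | ∀ a : Fin n → H, (∀ i, a i ∈ A i) →
        listComm ((List.ofFn a).insertIdx k g) = 1} := by
  classical
  have hinv' : ∀ B ∈ List.ofFn A, ∀ g : H, ∀ c ∈ B, g⁻¹ * c * g ∈ B := by
    intro B hB g c hc
    obtain ⟨i, rfl⟩ := List.mem_ofFn.mp hB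
    rw [← hinv i g]
    exact Set.mem_image_of_mem _ hc
  set P := (List.ofFn A).take k with hPdef
  set Q := (List.ofFn A).drop k with hQdef
  have hP : ∀ B ∈ P, ∀ g : H, ∀ c ∈ B, g⁻¹ * c * g ∈ B :=
    fun B hB => hinv' B (List.mem_of_mem_take hB)
  have hQ : ∀ B ∈ Q, ∀ g : H, ∀ c ∈ B, g⁻¹ * c * g ∈ B :=
    fun B hB => hinv' B (List.mem_of_mem_drop hB)
  obtain ⟨N, hNn, hNs⟩ := master P Q hP hQ
  refine ⟨N, hNn, ?_⟩
  rw [hNs]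
  have hlenP : P.length = k := by simp [hPdef, hk]
  ext g
  simp only [Set.mem_setOf_eq]
  constructor
  · intro hg a ha
    have hfa : List.Forall₂ (· ∈ ·) (List.ofFn a) (List.ofFn A) := by
      rw [List.forall₂_iff_get]
      refine ⟨by simp, fun i h₁ h₂ => ?_⟩
      rw [List.get_ofFn, List.get_ofFn]
      exact ha _
    have h1 := hg ((List.ofFn a).take k) ((List.ofFn a).drop k)
      (List.forall₂_take k hfa) (List.forall₂_drop k hfa)
    rw [insertIdx_eq g k (List.ofFn a) (by simpa using hk)]
    exact h1
  · intro hg p q hp hq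
    have hlp : p.length = k := by
      rw [List.forall₂_iff_get] at hp
      rw [hp.1, hlenP]
    have hfb : List.Forall₂ (· ∈ ·) (p ++ q) (List.ofFn A) := by
      simpa only [hPdef, hQdef, List.take_append_drop] using List.rel_append hp hq
    have hlb : (p ++ q).length = n := by
      rw [List.forall₂_iff_get] at hfb
      simpa using hfb.1
    set a : Fin n → H := fun i => (p ++ q).get (Fin.cast hlb.symm i) with hadef
    have hofn : List.ofFn a = p ++ q := by
      apply List.ext_get (by simp [hlb])
      intro i h₁ h₂
      simp [hadef, List.get_ofFn]
    have ha : ∀ i, a i ∈ A i := by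
      intro i
      rw [List.forall₂_iff_get] at hfb
      have := hfb.2 i (by rw [hlb]; exact i.isLt) (by simp)
      rw [List.get_ofFn] at this
      simpa [hadef] using this
    have := hg a ha
    rw [hofn, insertIdx_eq g k (p ++ q) (by rw [hlb]; exact hk),
      List.take_left' hlp, List.drop_left' hlp] at this
    exact this
end

section
/- Let H be a group admitting a normal abelian subgroup A such that the quotient H/A is a torsion group. Let a ∈ H be an element of infinite order, and suppose i, j ∈ ℤ are such that a^i and a^j are conjugate in H (i.e. there is g ∈ H with g⁻¹a^ig = a^j). Then |i| = |j|. -/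
/-- If `H` has a normal abelian subgroup `A` with `H/A` a torsion group, `a ∈ H` has
infinite order, and `a^i` is conjugate to `a^j`, then `|i| = |j|`. -/
theorem stmt_1 {H : Type*} [Group H] (A : Subgroup H) [A.Normal]
    (hab : ∀ x y : A, x * y = y * x)
    (htor : Monoid.IsTorsion (H ⧸ A))
    (a : H) (ha : ¬ IsOfFinOrder a)
    (i j : ℤ) (g : H) (hconj : g⁻¹ * a ^ i * g = a ^ j) :
    |i| = |j| := by
  -- conjugation lemma
  have hcg : ∀ (c x : H) (k : ℤ), c⁻¹ * x ^ k * c = (c⁻¹ * x * c) ^ k := by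
    intro c x k
    have h := conj_zpow (i := k) (a := c⁻¹) (b := x)
    rw [inv_inv] at h
    exact h.symm
  -- iterated conjugation
  have key : ∀ m : ℕ, (g ^ m)⁻¹ * a ^ (i ^ m) * g ^ m = a ^ (j ^ m) := by
    intro m
    induction m with
    | zero => simp
    | succ m ih =>
      have e1 : a ^ (i ^ (m + 1)) = (a ^ i) ^ (i ^ m) := by
        rw [← zpow_mul, ← pow_succ']
      calc (g ^ (m + 1))⁻¹ * a ^ (i ^ (m + 1)) * g ^ (m + 1)
          = (g ^ m)⁻¹ * (g⁻¹ * (a ^ i) ^ (i ^ m) * g) * g ^ m := by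
            rw [e1, pow_succ]; group
        _ = (g ^ m)⁻¹ * (g⁻¹ * a ^ i * g) ^ (i ^ m) * g ^ m := by rw [hcg]
        _ = (g ^ m)⁻¹ * (a ^ (i ^ m)) ^ j * g ^ m := by
            rw [hconj, ← zpow_mul, ← zpow_mul, mul_comm]
        _ = ((g ^ m)⁻¹ * a ^ (i ^ m) * g ^ m) ^ j := (hcg _ _ _)
        _ = (a ^ (j ^ m)) ^ j := by rw [ih]
        _ = a ^ (j ^ (m + 1)) := by rw [← zpow_mul, ← pow_succ]
  -- pick m with g^m ∈ A
  obtain ⟨m, hm, hgm⟩ := (isOfFinOrder_iff_pow_eq_one).mp (htor (g : H ⧸ A))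
  have hgmA : g ^ m ∈ A := by
    rwa [← QuotientGroup.eq_one_iff, QuotientGroup.mk_pow]
  -- pick n with a^n ∈ A
  obtain ⟨n, hn, han⟩ := (isOfFinOrder_iff_pow_eq_one).mp (htor (a : H ⧸ A))
  have hanA : a ^ n ∈ A := by
    rwa [← QuotientGroup.eq_one_iff, QuotientGroup.mk_pow]
  -- a^n and g^m commute
  have hcomm : Commute (g ^ m) (a ^ n) := by
    have := hab ⟨g ^ m, hgmA⟩ ⟨a ^ n, hanA⟩
    exact Subtype.ext_iff.mp this
  have hcomm2 : Commute (g ^ m) (a ^ ((n : ℤ) * i ^ m)) := by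
    have h : a ^ ((n : ℤ) * i ^ m) = (a ^ n) ^ (i ^ m) := by
      rw [← zpow_natCast, ← zpow_mul]
    rw [h]
    exact hcomm.zpow_right _
  -- raise key to power n
  have keyn : (g ^ m)⁻¹ * a ^ ((n : ℤ) * i ^ m) * g ^ m = a ^ ((n : ℤ) * j ^ m) := by
    have h := congrArg (· ^ (n : ℤ)) (key m)
    rw [← hcg, ← zpow_mul, ← zpow_mul, mul_comm (i ^ m), mul_comm (j ^ m)] at h
    exact h
  have heq : a ^ ((n : ℤ) * i ^ m) = a ^ ((n : ℤ) * j ^ m) := by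
    rw [← keyn, hcomm2.inv_left.eq]
    group
  have hinj : Function.Injective (fun k : ℤ => a ^ k) :=
    injective_zpow_iff_not_isOfFinOrder.mpr ha
  have h1 : (n : ℤ) * i ^ m = (n : ℤ) * j ^ m := hinj heq
  have hn0 : (n : ℤ) ≠ 0 := by exact_mod_cast hn.ne'
  have h2 : i ^ m = j ^ m := mul_left_cancel₀ hn0 h1
  have h3 : i.natAbs ^ m = j.natAbs ^ m := by
    have := congrArg Int.natAbs h2
    simpa [Int.natAbs_pow] using this
  have h4 : i.natAbs = j.natAbs := Nat.pow_left_injective hm.ne' h3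
  rw [Int.abs_eq_natAbs, Int.abs_eq_natAbs, h4]
end

section
/- Let G be a group, let b, c ∈ G, and let S ⊆ ℕ be a finite set. Suppose that for every positive integer k ∉ S, the elements b^k and c^k commute, i.e. [b^k, c^k] = 1. Then b and c commute, i.e. [b, c] = 1. -/
private lemma commute_pow_sub' {G : Type*} [Group G] (a b : G) (m n : ℕ) (hmn : m ≤ n)
    (h1 : Commute a (b ^ m)) (h2 : Commute a (b ^ n)) : Commute a (b ^ (n - m)) := by
  have hb : b ^ (n - m) = (b ^ m)⁻¹ * b ^ n := by
    rw [eq_inv_mul_iff_mul_eq, ← pow_add, Nat.add_sub_cancel' hmn]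
  rw [hb]
  exact h1.inv_right.mul_right h2

private lemma commute_of_coprime' {G : Type*} [Group G] (a b : G) (m n : ℕ)
    (hco : Nat.Coprime m n) (h1 : Commute a (b ^ m)) (h2 : Commute a (b ^ n)) :
    Commute a b := by
  obtain ⟨u, v, huv⟩ : ∃ u v : ℤ, (m : ℤ) * u + (n : ℤ) * v = 1 := by
    refine ⟨Nat.gcdA m n, Nat.gcdB m n, ?_⟩
    have := Nat.gcd_eq_gcd_ab m n
    rw [hco] at this
    simpa using this.symm
  have hb : b = (b ^ m) ^ u * (b ^ n) ^ v := by
    conv_lhs => rw [← zpow_one b, ← huv]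
    rw [zpow_add, zpow_mul, zpow_mul, zpow_natCast, zpow_natCast]
  rw [hb]
  exact (h1.zpow_right u).mul_right (h2.zpow_right v)

/-- If `S ⊆ ℕ` is finite and `[b^k, c^k] = 1` for every positive integer `k ∉ S`, then
`[b, c] = 1`. -/
theorem stmt_3 {G : Type*} [Group G] (b c : G) (S : Finset ℕ)
    (h : ∀ k : ℕ, 0 < k → k ∉ S → (b ^ k)⁻¹ * (c ^ k)⁻¹ * b ^ k * c ^ k = 1) :
    b⁻¹ * c⁻¹ * b * c = 1 := by
  set N : ℕ := S.sup id + 1 with hN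
  have hc : ∀ k, N ≤ k → Commute (b ^ k) (c ^ k) := by
    intro k hk
    have hk0 : 0 < k := lt_of_lt_of_le (Nat.succ_pos _) hk
    have hkS : k ∉ S := by
      intro hmem
      have := Finset.le_sup (f := id) hmem
      simp only [id] at this
      omega
    have heq := h k hk0 hkS
    have : b ^ k * c ^ k = c ^ k * b ^ k := by
      have h2 : c ^ k * (b ^ k * ((b ^ k)⁻¹ * (c ^ k)⁻¹ * b ^ k * c ^ k)) =
          c ^ k * (b ^ k * 1) := by rw [heq]
      simpa [mul_assoc] using h2
    exact this
  -- Step 1: b commutes with c ^ (n * (n + 1)) for n ≥ N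
  have step1 : ∀ n, N ≤ n → Commute b (c ^ (n * (n + 1))) := by
    intro n hn
    have h1 : Commute (b ^ n) (c ^ (n * (n + 1))) := by
      have := (hc n hn).pow_right (n + 1)
      rwa [← pow_mul] at this
    have h2 : Commute (b ^ (n + 1)) (c ^ (n * (n + 1))) := by
      have := (hc (n + 1) (by omega)).pow_right n
      rwa [← pow_mul, Nat.mul_comm] at this
    have := commute_pow_sub' (c ^ (n * (n + 1))) b n (n + 1) (by omega) h1.symm h2.symm
    simpa using this.symm
  -- Step 2: b commutes with c ^ 2
  have step2 : Commute b (c ^ 2) := by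
    have d : ∀ n, N ≤ n → Commute b (c ^ (2 * (n + 1))) := by
      intro n hn
      have := commute_pow_sub' b c (n * (n + 1)) ((n + 1) * (n + 2))
        (by nlinarith) (step1 n hn) (step1 (n + 1) (by omega))
      have hexp : (n + 1) * (n + 2) - n * (n + 1) = 2 * (n + 1) := by ring_nf; omega
      rwa [hexp] at this
    have := commute_pow_sub' b c (2 * (N + 1)) (2 * (N + 2))
      (by omega) (d N le_rfl) (d (N + 1) (by omega))
    have hexp : 2 * (N + 2) - 2 * (N + 1) = 2 := by omega
    rwa [hexp] at this
  -- Step 3: for odd n ≥ N, (b ^ n) commutes with c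
  have step3 : ∀ m : ℕ, N ≤ 2 * m + 1 → Commute (b ^ (2 * m + 1)) c := by
    intro m hm
    have h1 : Commute (b ^ (2 * m + 1)) (c ^ (2 * m)) := by
      have := (step2.pow_left (2 * m + 1)).pow_right m
      rwa [← pow_mul] at this
    have h2 : Commute (b ^ (2 * m + 1)) (c ^ (2 * m + 1)) := hc _ hm
    have := commute_pow_sub' (b ^ (2 * m + 1)) c (2 * m) (2 * m + 1) (by omega) h1 h2
    simpa using this
  -- Conclusion: gcd(2N+1, 2N+3) = 1
  have hco : Nat.Coprime (2 * N + 1) (2 * (N + 1) + 1) := by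
    have : Nat.gcd (2 * N + 1) (2 * (N + 1) + 1) ∣ 2 := by
      have hsub := Nat.dvd_sub (Nat.gcd_dvd_right (2 * N + 1) (2 * (N + 1) + 1))
        (Nat.gcd_dvd_left (2 * N + 1) (2 * (N + 1) + 1))
      have he : 2 * (N + 1) + 1 - (2 * N + 1) = 2 := by omega
      rwa [he] at hsub
    rcases (Nat.dvd_prime Nat.prime_two).mp this with h1 | h2
    · exact h1
    · exfalso
      have hd := Nat.gcd_dvd_left (2 * N + 1) (2 * (N + 1) + 1)
      rw [h2] at hd
      omega
  have hfin : Commute b c := by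
    have h1 := (step3 N (by omega)).symm
    have h2 := (step3 (N + 1) (by omega)).symm
    exact (commute_of_coprime' c b (2 * N + 1) (2 * (N + 1) + 1) hco h1 h2).symm
  have hbc : b * c = c * b := hfin
  calc b⁻¹ * c⁻¹ * b * c = b⁻¹ * (c⁻¹ * (b * c)) := by simp [mul_assoc]
    _ = b⁻¹ * (c⁻¹ * (c * b)) := by rw [hbc]
    _ = 1 := by simp
end

section
/- Let H be a group and N ⊴ H a normal subgroup such that for every a ∈ H the set of commutators [a, N] is a subgroup of H, and such that the family {[a,N] : a ∈ H} is totally ordered by inclusion (for all a, b ∈ H, [a,N] ⊆ [b,N] or [b,N] ⊆ [a,N]). Then: (1) for all a ∈ H, [a,N] = {1} if and only if a ∈ C_H(N); (2) for all a, b, g ∈ H, if [a,N] ⊊ [b,N] then [a^g,N] ⊊ [b^g,N]; (3) for all a ∈ H, [a⁻¹,N] = [a,N]; (4) for all a, b ∈ H, [ab,N] ⊆ [a,N] ∪ [b,N]. -/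
/-- The set of commutators `[a, N] = {a⁻¹ n⁻¹ a n : n ∈ N}`. -/
def commSet {H : Type*} [Group H] (a : H) (N : Subgroup H) : Set H :=
  {x | ∃ n ∈ N, x = a⁻¹ * n⁻¹ * a * n}

lemma commSet_conj {H : Type*} [Group H] (N : Subgroup H) [N.Normal] (a g : H) :
    commSet (g⁻¹ * a * g) N = (fun x => g⁻¹ * x * g) '' commSet a N := by
  ext x
  constructor
  · rintro ⟨n, hn, rfl⟩
    exact ⟨a⁻¹ * (g * n * g⁻¹)⁻¹ * a * (g * n * g⁻¹),
      ⟨g * n * g⁻¹, Subgroup.Normal.conj_mem ‹N.Normal› n hn g, rfl⟩, by group⟩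
  · rintro ⟨y, ⟨n, hn, rfl⟩, rfl⟩
    exact ⟨g⁻¹ * n * g, Subgroup.Normal.conj_mem' ‹N.Normal› n hn g, by group⟩

/-- Suppose `N ⊴ H`, each `[a,N]` is a subgroup of `H`, and the family `{[a,N] : a ∈ H}`
is totally ordered by inclusion. Then: (1) `[a,N] = {1}` iff `a ∈ C_H(N)`;
(2) if `[a,N] ⊊ [b,N]` then `[a^g,N] ⊊ [b^g,N]`; (3) `[a⁻¹,N] = [a,N]`;
(4) `[ab,N] ⊆ [a,N] ∪ [b,N]`. -/
theorem stmt_8 {H : Type*} [Group H] (N : Subgroup H) [N.Normal]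
    (hgrp : ∀ a : H, ∃ S : Subgroup H, (S : Set H) = commSet a N)
    (hchain : ∀ a b : H, commSet a N ⊆ commSet b N ∨ commSet b N ⊆ commSet a N) :
    (∀ a : H, commSet a N = {1} ↔ a ∈ Subgroup.centralizer (N : Set H)) ∧
    (∀ a b g : H, commSet a N ⊂ commSet b N →
        commSet (g⁻¹ * a * g) N ⊂ commSet (g⁻¹ * b * g) N) ∧
    (∀ a : H, commSet a⁻¹ N = commSet a N) ∧
    (∀ a b : H, commSet (a * b) N ⊆ commSet a N ∪ commSet b N) := by
  -- closure properties
  have hmul : ∀ a x y : H, x ∈ commSet a N → y ∈ commSet a N → x * y ∈ commSet a N := by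
    intro a x y hx hy
    obtain ⟨S, hS⟩ := hgrp a
    rw [← hS] at hx hy ⊢
    exact S.mul_mem hx hy
  have hinv : ∀ a x : H, x ∈ commSet a N → x⁻¹ ∈ commSet a N := by
    intro a x hx
    obtain ⟨S, hS⟩ := hgrp a
    rw [← hS] at hx ⊢
    exact S.inv_mem hx
  -- (3)
  have haux : ∀ a : H, commSet a⁻¹ N ⊆ commSet a N := by
    rintro a x ⟨n, hn, rfl⟩
    have hm : a * n * a⁻¹ ∈ N := Subgroup.Normal.conj_mem ‹N.Normal› n hn a
    have h1 : a⁻¹ * (a * n * a⁻¹)⁻¹ * a * (a * n * a⁻¹) ∈ commSet a N :=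
      ⟨a * n * a⁻¹, hm, rfl⟩
    have h2 := hinv a _ h1
    have : (a⁻¹ * (a * n * a⁻¹)⁻¹ * a * (a * n * a⁻¹))⁻¹
        = a⁻¹⁻¹ * n⁻¹ * a⁻¹ * n := by group
    rwa [this] at h2
  have h3 : ∀ a : H, commSet a⁻¹ N = commSet a N := by
    intro a
    refine subset_antisymm (haux a) ?_
    have := haux a⁻¹
    rwa [inv_inv] at this
  -- conjugation is monotone
  have hconjmono : ∀ a b g : H, commSet a N ⊆ commSet b N →
      commSet (g⁻¹ * a * g) N ⊆ commSet (g⁻¹ * b * g) N := by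
    intro a b g h
    rw [commSet_conj, commSet_conj]
    exact Set.image_mono h
  -- key lemma for (4)
  have hkey : ∀ x y : H, commSet x N ⊆ commSet y N →
      commSet (x * y) N ⊆ commSet y N := by
    rintro x y h z ⟨n, hn, rfl⟩
    have h1 : y⁻¹ * (x⁻¹ * n⁻¹ * x * n) * y ∈ commSet (y⁻¹ * x * y) N := by
      rw [commSet_conj]
      exact ⟨_, ⟨n, hn, rfl⟩, rfl⟩
    have h2 : commSet (y⁻¹ * x * y) N ⊆ commSet y N := by
      have := hconjmono x y y h
      have hy : y⁻¹ * y * y = y := by group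
      rwa [hy] at this
    have e1 : y⁻¹ * (x⁻¹ * n⁻¹ * x * n) * y ∈ commSet y N := h2 h1
    have e2 : y⁻¹ * n⁻¹ * y * n ∈ commSet y N := ⟨n, hn, rfl⟩
    have heq : (x * y)⁻¹ * n⁻¹ * (x * y) * n
        = (y⁻¹ * (x⁻¹ * n⁻¹ * x * n) * y) * (y⁻¹ * n⁻¹ * y * n) := by group
    rw [heq]
    exact hmul y _ _ e1 e2
  refine ⟨?_, ?_, h3, ?_⟩
  · -- (1)
    intro a
    constructor
    · intro h
      rw [Subgroup.mem_centralizer_iff]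
      intro n hn
      have : a⁻¹ * n⁻¹ * a * n ∈ commSet a N := ⟨n, hn, rfl⟩
      rw [h, Set.mem_singleton_iff] at this
      have h2 := congrArg (fun z => n * a * z) this
      simpa [mul_assoc] using h2.symm
    · intro h
      ext x
      simp only [Set.mem_singleton_iff]
      constructor
      · rintro ⟨n, hn, rfl⟩
        have := Subgroup.mem_centralizer_iff.mp h n hn
        calc a⁻¹ * n⁻¹ * a * n = a⁻¹ * n⁻¹ * (a * n) := by rw [mul_assoc]
          _ = a⁻¹ * n⁻¹ * (n * a) := by rw [this]
          _ = 1 := by group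
      · rintro rfl
        exact ⟨1, N.one_mem, by group⟩
  · -- (2)
    intro a b g hab
    rw [commSet_conj, commSet_conj]
    have hinj : Function.Injective (fun x : H => g⁻¹ * x * g) := by
      intro u v huv
      simpa using mul_left_cancel (mul_right_cancel huv)
    constructor
    · exact Set.image_mono hab.1
    · intro hsub
      exact hab.2 (fun z hz => by
        have := hsub ⟨z, hz, rfl⟩
        obtain ⟨w, hw, hwz⟩ := this
        rwa [← hinj hwz])
  · -- (4)
    intro a b
    rcases hchain a b with h | h
    · exact fun z hz => Or.inr (hkey a b h hz)
    · have h' : commSet b⁻¹ N ⊆ commSet a⁻¹ N := by rw [h3, h3]; exact h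
      have := hkey b⁻¹ a⁻¹ h'
      rw [h3] at this
      intro z hz
      have hz' : z ∈ commSet (b⁻¹ * a⁻¹) N := by
        rw [← mul_inv_rev, h3]; exact hz
      exact Or.inl (this hz')
end
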